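/- Assume the gap data satisfies conditions (i) and (iii) and that 0 < ε ≤ 1. Then there exists σ₀ > 0, depending only on a, b, κ₀ and ν, such that for every E ∈ S and every σ with 0 < σ ≤ σ₀ and E − σ < E̲, one has |(E − σ, E + σ) ∩ S| > σ/2. -/

import Mathlib

open MeasureTheory

/-- The sup-norm of a lattice point `m ∈ ℤ^ν`, as a real number. -/
noncomputable def snorm {ν : ℕ} (m : Fin ν → ℤ) : ℝ :=
  ((Finset.univ.sup fun i => (m i).natAbs : ℕ) : ℝ)

lemma snorm_nonneg' {ν : ℕ} (m : Fin ν → ℤ) : 0 ≤ snorm m := Nat.cast_nonneg _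

lemma one_le_snorm' {ν : ℕ} {m : Fin ν → ℤ} (hm : m ≠ 0) : 1 ≤ snorm m := by
  obtain ⟨i, hi⟩ : ∃ i, m i ≠ 0 := by
    by_contra h; push_neg at h; exact hm (funext h)
  have h1 : 1 ≤ (Finset.univ.sup fun i => (m i).natAbs) :=
    le_trans (Int.natAbs_pos.mpr hi)
      (Finset.le_sup (f := fun i => (m i).natAbs) (Finset.mem_univ i))
  unfold _root_.snorm
  exact_mod_cast h1

lemma abs_le_snorm {ν : ℕ} (m : Fin ν → ℤ) (i : Fin ν) : |(m i : ℝ)| ≤ snorm m := by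
  have h1 : (m i).natAbs ≤ Finset.univ.sup fun i => (m i).natAbs :=
    Finset.le_sup (f := fun i => (m i).natAbs) (Finset.mem_univ i)
  have h2 : ((m i).natAbs : ℝ) ≤ snorm m := by
    unfold _root_.snorm; exact_mod_cast h1
  rwa [Nat.cast_natAbs, Int.cast_abs] at h2

lemma sum_abs_le_snorm {ν : ℕ} (m : Fin ν → ℤ) :
    ∑ i, |(m i : ℝ)| ≤ (ν : ℝ) * snorm m := by
  calc ∑ i, |(m i : ℝ)| ≤ ∑ _i : Fin ν, snorm m :=
        Finset.sum_le_sum fun i _ => abs_le_snorm m i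
    _ = (ν : ℝ) * snorm m := by simp [mul_comm]

lemma exp_snorm_le_prod {ν : ℕ} (hν : 1 ≤ ν) {c : ℝ} (hc : 0 ≤ c) (m : Fin ν → ℤ) :
    Real.exp (-c * snorm m) ≤ ∏ i, Real.exp (-(c / ν) * |(m i : ℝ)|) := by
  have hν0 : (0 : ℝ) < ν := by exact_mod_cast hν
  rw [← Real.exp_sum]
  apply Real.exp_le_exp.mpr
  have h0 : ∑ i, -(c / ν) * |(m i : ℝ)| = -(c / ν) * ∑ i, |(m i : ℝ)| := by
    rw [Finset.mul_sum]
  rw [h0]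
  have h1 : (c / ν) * ∑ i, |(m i : ℝ)| ≤ (c / ν) * ((ν : ℝ) * snorm m) :=
    mul_le_mul_of_nonneg_left (sum_abs_le_snorm m) (div_nonneg hc hν0.le)
  have h2 : (c / ν) * ((ν : ℝ) * snorm m) = c * snorm m := by
    field_simp
  nlinarith [h1, h2]

lemma tsum_pi_prod (n : ℕ) (g : ℤ → ENNReal) :
    ∑' m : Fin n → ℤ, ∏ i, g (m i) = (∑' k : ℤ, g k) ^ n := by
  induction n with
  | zero =>
    rw [pow_zero]
    have h0 : (fun m : Fin 0 → ℤ => ∏ i, g (m i)) = fun _ => (1 : ENNReal) :=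
      funext fun m => by simp
    rw [h0]
    exact tsum_eq_single (fun i => (0 : ℤ))
      (fun x hx => absurd (funext fun i => i.elim0) hx)
  | succ n ih =>
    rw [← (Fin.consEquiv (fun _ : Fin (n + 1) => ℤ)).tsum_eq (fun m => ∏ i, g (m i))]
    have : ∀ p : ℤ × (Fin n → ℤ),
        (∏ i, g ((Fin.consEquiv (fun _ : Fin (n + 1) => ℤ)) p i)) = g p.1 * ∏ i, g (p.2 i) := by
      intro p
      simp only [Fin.consEquiv, Equiv.coe_fn_mk]
      rw [Fin.prod_univ_succ]
      simp
    rw [tsum_congr this, ENNReal.tsum_prod']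
    calc ∑' (a : ℤ) (b : Fin n → ℤ), g a * ∏ i, g (b i)
        = ∑' a : ℤ, g a * ∑' b : Fin n → ℤ, ∏ i, g (b i) := by
          congr 1; funext a; exact ENNReal.tsum_mul_left
      _ = (∑' a : ℤ, g a) * (∑' k : ℤ, g k) ^ n := by rw [ENNReal.tsum_mul_right, ih]
      _ = (∑' k : ℤ, g k) ^ (n + 1) := by ring

lemma summable_exp_neg_abs_int {c : ℝ} (hc : 0 < c) :
    Summable fun k : ℤ => Real.exp (-c * |(k : ℝ)|) := by
  have hgeom : Summable fun n : ℕ => Real.exp (-c) ^ n :=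
    summable_geometric_of_lt_one (Real.exp_nonneg _)
      (Real.exp_lt_one_iff.mpr (by linarith))
  have key : ∀ n : ℕ, Real.exp (-c * |((n : ℤ) : ℝ)|) = Real.exp (-c) ^ n := by
    intro n
    rw [← Real.exp_nat_mul]
    congr 1
    simp [abs_of_nonneg]
    ring
  apply Summable.of_nat_of_neg
  · exact hgeom.congr fun n => (key n).symm
  · refine hgeom.congr fun n => ?_
    rw [← key n]
    congr 2
    push_cast
    rw [abs_neg]

lemma pow_div_le_exp {y : ℝ} (hy : 0 ≤ y) {k : ℕ} (hk : k ≠ 0) :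
    (y / k) ^ k ≤ Real.exp y := by
  have hk0 : (0 : ℝ) < k := by exact_mod_cast Nat.pos_of_ne_zero hk
  have h1 : Real.exp y = Real.exp (y / k) ^ k := by
    rw [← Real.exp_nat_mul]
    congr 1
    field_simp
  rw [h1]
  apply pow_le_pow_left₀ (div_nonneg hy hk0.le)
  nlinarith [Real.add_one_le_exp (y / k)]

set_option maxHeartbeats 1000000 in
/-- If the gap data satisfies conditions (i) and (iii) and `0 < ε ≤ 1`, then there is
`σ₀ > 0` depending only on `a, b, κ₀, ν` such that for every `E ∈ S` and every
`0 < σ ≤ σ₀` with `E - σ < E̲`, one has `|(E - σ, E + σ) ∩ S| > σ/2`. -/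
theorem homogeneity_near_bottom
    (ν : ℕ) (hν : 1 ≤ ν) (a b κ₀ : ℝ) (ha : 0 < a) (hb : 0 < b) (hκ₀ : 0 < κ₀) :
    ∃ σ₀ : ℝ, 0 < σ₀ ∧
      ∀ (ε Elow : ℝ) (Em Ep : (Fin ν → ℤ) → ℝ),
        0 < ε → ε ≤ 1 →
        -- gap data: `E_m⁻ ≤ E_m⁺`
        (∀ m : Fin ν → ℤ, m ≠ 0 → Em m ≤ Ep m) →
        -- condition (i)
        (∀ m : Fin ν → ℤ, m ≠ 0 →
          Ep m - Em m ≤ 2 * ε * Real.exp (-(κ₀ / 2) * snorm m)) →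
        -- condition (iii)
        (∀ m : Fin ν → ℤ, m ≠ 0 → a * snorm m ^ (-b) ≤ Em m - Elow) →
        ∀ E ∈ Set.Ici Elow \ ⋃ m ∈ {m : Fin ν → ℤ | m ≠ 0}, Set.Ioo (Em m) (Ep m),
          ∀ σ : ℝ, 0 < σ → σ ≤ σ₀ → E - σ < Elow →
            ENNReal.ofReal (σ / 2) <
              volume (Set.Ioo (E - σ) (E + σ) ∩
                (Set.Ici Elow \ ⋃ m ∈ {m : Fin ν → ℤ | m ≠ 0}, Set.Ioo (Em m) (Ep m))) := by
  have hν0 : (0 : ℝ) < ν := by exact_mod_cast hν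
  -- the ℤ-sum and its ν-th power
  set c' : ℝ := κ₀ / 4 / ν with hc'
  have hc'pos : 0 < c' := by positivity
  have hG : Summable fun k : ℤ => Real.exp (-c' * |(k : ℝ)|) := summable_exp_neg_abs_int hc'pos
  set GR : ℝ := ∑' k : ℤ, Real.exp (-c' * |(k : ℝ)|) with hGR
  have hGRnn : 0 ≤ GR := tsum_nonneg fun k => (Real.exp_pos _).le
  set TR : ℝ := GR ^ ν with hTR
  have hTRnn : 0 ≤ TR := pow_nonneg hGRnn _
  -- the exponent k
  set k : ℕ := max 1 ⌈2 * b⌉₊ with hk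
  have hk0 : k ≠ 0 := by positivity
  have hkpos : (0 : ℝ) < k := by exact_mod_cast Nat.pos_of_ne_zero hk0
  have hk2b : 2 * b ≤ (k : ℝ) := le_trans (Nat.le_ceil _) (by exact_mod_cast le_max_right 1 ⌈2 * b⌉₊)
  -- the constant
  set C : ℝ := 2 * TR * (4 * k / κ₀) ^ k * (2 / a) ^ 2 + 1 with hC
  have hCpos : 0 < C := by positivity
  refine ⟨min (a / 2) (min 1 (1 / (4 * C))), by positivity, ?_⟩
  intro ε Elow Em Ep hε hε1 hEmEp hcondi hcondiii E hE σ hσ hσ0 hEσ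
  obtain ⟨hEIci, hEU⟩ := hE
  have hEle : Elow ≤ E := hEIci
  have hσa : σ ≤ a / 2 := le_trans hσ0 (min_le_left _ _)
  have hσC : σ ≤ 1 / (4 * C) := le_trans hσ0 (le_trans (min_le_right _ _) (min_le_right _ _))
  -- y and its properties
  set y : ℝ := (a / (2 * σ)) ^ ((1 : ℝ) / b) with hy
  have hbase1 : 1 ≤ a / (2 * σ) := by
    rw [le_div_iff₀ (by linarith)]
    linarith
  have hy1 : 1 ≤ y := by
    rw [hy]
    calc (1 : ℝ) = 1 ^ ((1 : ℝ) / b) := (Real.one_rpow _).symm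
      _ ≤ (a / (2 * σ)) ^ ((1 : ℝ) / b) :=
          Real.rpow_le_rpow zero_le_one hbase1 (by positivity)
  -- the key real estimate: 2 * exp(-(κ₀/4) y) * TR ≤ σ / 4
  have hkey : 2 * Real.exp (-(κ₀ / 4) * y) * TR ≤ σ / 4 := by
    -- lower bound on exp((κ₀/4) y)
    have h1 : ((κ₀ / 4) * y / k) ^ k ≤ Real.exp ((κ₀ / 4) * y) :=
      pow_div_le_exp (by positivity) hk0
    have h2 : ((κ₀ / 4) * y / k) ^ k = (κ₀ / (4 * k)) ^ k * y ^ k := by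
      rw [← mul_pow]
      congr 1
      field_simp
    have hyk : (a / (2 * σ)) ^ (2 : ℝ) ≤ y ^ k := by
      have : y ^ k = (a / (2 * σ)) ^ (((1 : ℝ) / b) * k) := by
        rw [hy, ← Real.rpow_natCast ((a / (2 * σ)) ^ ((1 : ℝ) / b)) k,
          ← Real.rpow_mul (by positivity)]
      rw [this]
      apply Real.rpow_le_rpow_of_exponent_le hbase1
      rw [div_mul_eq_mul_div, le_div_iff₀ hb]
      linarith
    have hyk' : (a / (2 * σ)) ^ (2 : ℕ) ≤ y ^ k := by
      have h := hyk
      rwa [show (2:ℝ) = ((2:ℕ):ℝ) by norm_num, Real.rpow_natCast] at h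
    have hD : (0 : ℝ) < (κ₀ / (4 * k)) ^ k := by positivity
    have hexp_lb : (κ₀ / (4 * k)) ^ k * (a / (2 * σ)) ^ 2 ≤ Real.exp ((κ₀ / 4) * y) := by
      calc (κ₀ / (4 * k)) ^ k * (a / (2 * σ)) ^ 2
          ≤ (κ₀ / (4 * k)) ^ k * y ^ k := mul_le_mul_of_nonneg_left hyk' hD.le
        _ = ((κ₀ / 4) * y / k) ^ k := h2.symm
        _ ≤ Real.exp ((κ₀ / 4) * y) := h1
    have hexp_pos : (0 : ℝ) < Real.exp ((κ₀ / 4) * y) := Real.exp_pos _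
    have hprod : (0 : ℝ) < (κ₀ / (4 * k)) ^ k * (a / (2 * σ)) ^ 2 := by positivity
    have hquot : Real.exp (-(κ₀ / 4) * y) ≤ (4 * k / κ₀) ^ k * (2 * σ / a) ^ 2 := by
      rw [neg_mul, Real.exp_neg]
      have h5 : (Real.exp (κ₀ / 4 * y))⁻¹ ≤ ((κ₀ / (4 * k)) ^ k * (a / (2 * σ)) ^ 2)⁻¹ :=
        inv_anti₀ hprod hexp_lb
      have e : ((κ₀ / (4 * (k:ℝ))) ^ k * (a / (2 * σ)) ^ 2)⁻¹
          = (4 * (k:ℝ) / κ₀) ^ k * (2 * σ / a) ^ 2 := by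
        rw [mul_inv, ← inv_pow, ← inv_pow, inv_div, inv_div]
      rwa [e] at h5
    have hCσ : 2 * TR * ((4 * k / κ₀) ^ k * (2 * σ / a) ^ 2) ≤ (C - 1) * σ ^ 2 := by
      apply le_of_eq
      rw [hC]
      ring
    have hfinal : (C - 1) * σ ^ 2 ≤ σ / 4 := by
      have h4 : C * σ ≤ 1 / 4 := by
        have h5 : C * σ ≤ C * (1 / (4 * C)) :=
          mul_le_mul_of_nonneg_left hσC hCpos.le
        have e : C * (1 / (4 * C)) = 1 / 4 := by
          field_simp
        linarith
      nlinarith [mul_le_mul_of_nonneg_right h4 hσ.le, sq_nonneg σ]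
    calc 2 * Real.exp (-(κ₀ / 4) * y) * TR
        ≤ 2 * ((4 * k / κ₀) ^ k * (2 * σ / a) ^ 2) * TR := by
          apply mul_le_mul_of_nonneg_right _ hTRnn
          exact mul_le_mul_of_nonneg_left hquot (by norm_num)
      _ = 2 * TR * ((4 * k / κ₀) ^ k * (2 * σ / a) ^ 2) := by ring
      _ ≤ (C - 1) * σ ^ 2 := hCσ
      _ ≤ σ / 4 := hfinal
  -- Notation for the union of gaps
  set U : Set ℝ := ⋃ m ∈ {m : Fin ν → ℤ | m ≠ 0}, Set.Ioo (Em m) (Ep m) with hU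
  -- any gap meeting Ico Elow (Elow + σ) has snorm m ≥ y
  have hgap : ∀ m : Fin ν → ℤ, m ≠ 0 → Em m < Elow + σ → y ≤ snorm m := by
    intro m hm hlt
    have hs1 : 1 ≤ snorm m := one_le_snorm' hm
    have hs0 : 0 < snorm m := by linarith
    have h1 : a * snorm m ^ (-b) < σ := by
      have := hcondiii m hm
      linarith
    have h2 : snorm m ^ (-b) = (snorm m ^ b)⁻¹ := by
      rw [← Real.rpow_neg hs0.le]
    have hsb : 0 < snorm m ^ b := Real.rpow_pos_of_pos hs0 b
    have h3 : a / (2 * σ) < snorm m ^ b := by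
      rw [h2, ← div_eq_mul_inv] at h1
      have h4 : a < σ * snorm m ^ b := (div_lt_iff₀ hsb).mp h1
      rw [div_lt_iff₀ (by linarith : (0:ℝ) < 2 * σ)]
      nlinarith [h4, hsb, hσ]
    calc y = (a / (2 * σ)) ^ ((1 : ℝ) / b) := rfl
      _ ≤ (snorm m ^ b) ^ ((1 : ℝ) / b) :=
          Real.rpow_le_rpow (by positivity) h3.le (by positivity)
      _ = snorm m := by
          rw [← Real.rpow_mul hs0.le, mul_one_div, div_self hb.ne', Real.rpow_one]
  -- measurability / countability
  have hUmeas : MeasurableSet U := by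
    apply MeasurableSet.biUnion (Set.to_countable _)
    intro m _
    exact measurableSet_Ioo
  -- the bad set B
  set B : Set (Fin ν → ℤ) := {m | m ≠ 0 ∧ y ≤ snorm m} with hB
  -- bound on each gap length for m ∈ B
  have hlen : ∀ m ∈ B, Ep m - Em m ≤
      2 * Real.exp (-(κ₀ / 4) * y) * Real.exp (-(κ₀ / 4) * snorm m) := by
    intro m hm
    obtain ⟨hm0, hmy⟩ := hm
    have h1 : Ep m - Em m ≤ 2 * ε * Real.exp (-(κ₀ / 2) * snorm m) := hcondi m hm0
    have h2 : 2 * ε * Real.exp (-(κ₀ / 2) * snorm m) ≤ 2 * Real.exp (-(κ₀ / 2) * snorm m) := by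
      have := Real.exp_pos (-(κ₀ / 2) * snorm m)
      nlinarith
    have h3 : Real.exp (-(κ₀ / 2) * snorm m)
        = Real.exp (-(κ₀ / 4) * snorm m) * Real.exp (-(κ₀ / 4) * snorm m) := by
      rw [← Real.exp_add]
      congr 1
      ring
    have h4 : Real.exp (-(κ₀ / 4) * snorm m) ≤ Real.exp (-(κ₀ / 4) * y) := by
      apply Real.exp_le_exp.mpr
      nlinarith [hmy, hκ₀]
    have h5 : Real.exp (-(κ₀ / 2) * snorm m)
        ≤ Real.exp (-(κ₀ / 4) * y) * Real.exp (-(κ₀ / 4) * snorm m) := by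
      rw [h3]
      exact mul_le_mul_of_nonneg_right h4 (Real.exp_pos _).le
    calc Ep m - Em m ≤ 2 * Real.exp (-(κ₀ / 2) * snorm m) := le_trans h1 h2
      _ ≤ 2 * (Real.exp (-(κ₀ / 4) * y) * Real.exp (-(κ₀ / 4) * snorm m)) := by
          apply mul_le_mul_of_nonneg_left h5 (by norm_num)
      _ = 2 * Real.exp (-(κ₀ / 4) * y) * Real.exp (-(κ₀ / 4) * snorm m) := by ring
  -- bound the measure of Ico ∩ U
  have hIcoU : Set.Ico Elow (Elow + σ) ∩ U ⊆ ⋃ m ∈ B, Set.Ioo (Em m) (Ep m) := by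
    rintro x ⟨hx1, hx2⟩
    rw [hU] at hx2
    simp only [Set.mem_iUnion, Set.mem_setOf_eq, exists_prop] at hx2
    obtain ⟨m, hm0, hxm⟩ := hx2
    exact Set.mem_biUnion ⟨hm0, hgap m hm0 (lt_trans hxm.1 hx1.2)⟩ hxm
  -- tsum bound
  have hT : ∑' m : (Fin ν → ℤ), ENNReal.ofReal (Real.exp (-(κ₀ / 4) * snorm m))
      ≤ ENNReal.ofReal TR := by
    calc ∑' m : (Fin ν → ℤ), ENNReal.ofReal (Real.exp (-(κ₀ / 4) * snorm m))
        ≤ ∑' m : (Fin ν → ℤ), ∏ i, ENNReal.ofReal (Real.exp (-c' * |(m i : ℝ)|)) := by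
          apply ENNReal.tsum_le_tsum
          intro m
          rw [← ENNReal.ofReal_prod_of_nonneg (fun i _ => (Real.exp_pos _).le)]
          apply ENNReal.ofReal_le_ofReal
          have := exp_snorm_le_prod hν (c := κ₀ / 4) (by positivity) m
          convert this using 2
      _ = (∑' j : ℤ, ENNReal.ofReal (Real.exp (-c' * |(j : ℝ)|))) ^ ν :=
          tsum_pi_prod ν (fun j => ENNReal.ofReal (Real.exp (-c' * |(j : ℝ)|)))
      _ = (ENNReal.ofReal GR) ^ ν := by
          rw [hGR, ENNReal.ofReal_tsum_of_nonneg (fun j => (Real.exp_pos _).le) hG]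
      _ = ENNReal.ofReal TR := by rw [hTR, ENNReal.ofReal_pow hGRnn]
  have hbad : volume (Set.Ico Elow (Elow + σ) ∩ U) ≤ ENNReal.ofReal (σ / 4) := by
    calc volume (Set.Ico Elow (Elow + σ) ∩ U)
        ≤ volume (⋃ m ∈ B, Set.Ioo (Em m) (Ep m)) := measure_mono hIcoU
      _ ≤ ∑' m : B, volume (Set.Ioo (Em m) (Ep m)) :=
          measure_biUnion_le volume (Set.to_countable B) _
      _ ≤ ∑' m : B, ENNReal.ofReal
            (2 * Real.exp (-(κ₀ / 4) * y) * Real.exp (-(κ₀ / 4) * snorm (m : Fin ν → ℤ))) := by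
          apply ENNReal.tsum_le_tsum
          intro m
          rw [Real.volume_Ioo]
          exact ENNReal.ofReal_le_ofReal (hlen m m.2)
      _ = ENNReal.ofReal (2 * Real.exp (-(κ₀ / 4) * y)) *
            ∑' m : B, ENNReal.ofReal (Real.exp (-(κ₀ / 4) * snorm (m : Fin ν → ℤ))) := by
          rw [← ENNReal.tsum_mul_left]
          congr 1
          funext m
          rw [← ENNReal.ofReal_mul (by positivity)]
      _ ≤ ENNReal.ofReal (2 * Real.exp (-(κ₀ / 4) * y)) *
            ∑' m : (Fin ν → ℤ), ENNReal.ofReal (Real.exp (-(κ₀ / 4) * snorm m)) := by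
          apply mul_le_mul_right
          exact Summable.tsum_le_tsum_of_inj (Subtype.val) Subtype.val_injective
            (fun _ _ => zero_le) (fun _ => le_rfl) ENNReal.summable ENNReal.summable
      _ ≤ ENNReal.ofReal (2 * Real.exp (-(κ₀ / 4) * y)) * ENNReal.ofReal TR :=
          mul_le_mul_right hT _
      _ = ENNReal.ofReal (2 * Real.exp (-(κ₀ / 4) * y) * TR) := by
          rw [← ENNReal.ofReal_mul (by positivity)]
      _ ≤ ENNReal.ofReal (σ / 4) := ENNReal.ofReal_le_ofReal hkey
  -- the inclusion of the good set
  have hincl : Set.Ico Elow (Elow + σ) \ U ⊆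
      Set.Ioo (E - σ) (E + σ) ∩ (Set.Ici Elow \ U) := by
    rintro x ⟨⟨hx1, hx2⟩, hx3⟩
    exact ⟨⟨by linarith, by linarith⟩, hx1, hx3⟩
  -- conclude
  have hIco : volume (Set.Ico Elow (Elow + σ)) = ENNReal.ofReal σ := by
    rw [Real.volume_Ico]
    congr 1
    ring
  have hdiff : volume (Set.Ico Elow (Elow + σ)) - volume (Set.Ico Elow (Elow + σ) ∩ U)
      ≤ volume (Set.Ico Elow (Elow + σ) \ U) := by
    rw [← Set.diff_self_inter]
    exact le_measure_diff
  calc ENNReal.ofReal (σ / 2) < ENNReal.ofReal (σ - σ / 4) := by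
        apply ENNReal.ofReal_lt_ofReal_iff_of_nonneg (by linarith) |>.mpr
        linarith
    _ = ENNReal.ofReal σ - ENNReal.ofReal (σ / 4) := by
        rw [ENNReal.ofReal_sub _ (by linarith)]
    _ ≤ volume (Set.Ico Elow (Elow + σ)) - volume (Set.Ico Elow (Elow + σ) ∩ U) := by
        rw [hIco]
        exact tsub_le_tsub le_rfl hbad
    _ ≤ volume (Set.Ico Elow (Elow + σ) \ U) := hdiff
    _ ≤ volume (Set.Ioo (E - σ) (E + σ) ∩ (Set.Ici Elow \ U)) := measure_mono hincl
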